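/- With Z(ζ,q) as the formal expansion 1/2 + Σ_{k≥1}(ζ^k + Σ_{n≥1} q^{nk}(ζ^k − ζ^{−k})), the constant term in ζ of Z² equals −2G₂(q) + 1/6, where G₂(q) = −1/24 + Σ_{n≥1} σ₁(n) q^n and σ₁(n) is the sum of divisors of n. -/

import Mathlib

/-- The family of `ζ`-coefficients of
`Z(ζ,q) = 1/2 + ∑_{k≥1} (ζ^k + ∑_{n≥1} q^{nk}(ζ^k − ζ^{−k}))`:
`Zc m` is the coefficient of `ζ^m`, a formal power series in `q`. -/
noncomputable def Zc : ℤ → PowerSeries ℚ := fun m =>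
  (if m = 0 then PowerSeries.C (1 / 2 : ℚ) else 0)
  + (∑ᶠ k : ℕ, if (k : ℤ) + 1 = m then
      (1 : PowerSeries ℚ) +
        PowerSeries.mk (fun N => if (k + 1) ∣ N ∧ 0 < N then (1 : ℚ) else 0)
    else 0)
  + (∑ᶠ k : ℕ, if -((k : ℤ) + 1) = m then
      -PowerSeries.mk (fun N => if (k + 1) ∣ N ∧ 0 < N then (1 : ℚ) else 0)
    else 0)

/-- The Eisenstein series `G₂ = −1/24 + ∑_{n≥1} σ₁(n) qⁿ`. -/
noncomputable def Gtwo : PowerSeries ℚ :=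
  PowerSeries.mk fun n => if n = 0 then (-1 / 24 : ℚ) else ∑ d ∈ n.divisors, (d : ℚ)

open PowerSeries Finset

/-- Auxiliary series `∑_{n≥1} q^{nd}`. -/
noncomputable def Ad (d : ℕ) : PowerSeries ℚ :=
  PowerSeries.mk fun N => if d ∣ N ∧ 0 < N then (1 : ℚ) else 0

lemma Zc_zero : Zc 0 = PowerSeries.C (1 / 2 : ℚ) := by
  unfold Zc
  have h1 : (∑ᶠ k : ℕ, if ((k : ℤ) + 1 = 0) then
      (1 : PowerSeries ℚ) +
        PowerSeries.mk (fun N => if (k + 1) ∣ N ∧ 0 < N then (1 : ℚ) else 0) else 0) = 0 :=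
    finsum_eq_zero_of_forall_eq_zero fun k => if_neg (by omega)
  have h2 : (∑ᶠ k : ℕ, if (-((k : ℤ) + 1) = 0) then
      -PowerSeries.mk (fun N => if (k + 1) ∣ N ∧ 0 < N then (1 : ℚ) else 0) else 0) = 0 :=
    finsum_eq_zero_of_forall_eq_zero fun k => if_neg (by omega)
  rw [if_pos rfl, h1, h2, add_zero, add_zero]

lemma Zc_pos (k : ℕ) : Zc ((k : ℤ) + 1) = 1 + Ad (k + 1) := by
  unfold Zc Ad
  rw [if_neg (by omega),
    finsum_eq_single _ k (fun j hj => by rw [if_neg]; omega), if_pos rfl,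
    finsum_eq_zero_of_forall_eq_zero (fun j => by rw [if_neg]; omega),
    add_zero, zero_add]

lemma Zc_neg (k : ℕ) : Zc (-((k : ℤ) + 1)) = -Ad (k + 1) := by
  unfold Zc Ad
  rw [if_neg (by omega),
    finsum_eq_zero_of_forall_eq_zero (fun j => by rw [if_neg]; omega),
    finsum_eq_single _ k (fun j hj => by rw [if_neg]; omega), if_pos rfl,
    add_zero, zero_add]

lemma coeff_Ad (d N : ℕ) :
    PowerSeries.coeff N (Ad d) = if d ∣ N ∧ 0 < N then (1 : ℚ) else 0 := by
  simp [Ad]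

lemma key (d N : ℕ) :
    PowerSeries.coeff N (Ad d * (1 + Ad d)) =
      if d ∣ N ∧ 0 < N then ((N / d : ℕ) : ℚ) else 0 := by
  rw [mul_add, mul_one, map_add, PowerSeries.coeff_mul,
    Finset.Nat.sum_antidiagonal_eq_sum_range_succ_mk]
  simp only [coeff_Ad]
  by_cases h : d ∣ N ∧ 0 < N
  · rw [if_pos h]
    have hterm : ∀ i ∈ Finset.range (N + 1),
        (if d ∣ i ∧ 0 < i then (1 : ℚ) else 0) *
          (if d ∣ (N - i) ∧ 0 < N - i then (1 : ℚ) else 0) =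
        if d ∣ i ∧ 0 < i ∧ i ≠ N then 1 else 0 := by
      intro i hi
      have hiN : i ≤ N := by simpa [Nat.lt_succ_iff] using Finset.mem_range.mp hi
      by_cases h1 : d ∣ i
      · by_cases h2 : 0 < i
        · by_cases h3 : i = N
          · subst h3; simp
          · rw [if_pos ⟨h1, h2⟩,
              if_pos ⟨Nat.dvd_sub h.1 h1, by omega⟩, if_pos ⟨h1, h2, h3⟩, one_mul]
        · rw [if_neg (by tauto), zero_mul, if_neg (by tauto)]
      · rw [if_neg (by tauto), zero_mul, if_neg (by tauto)]
    rw [Finset.sum_congr rfl hterm]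
    have hsplit : ∑ i ∈ Finset.range (N + 1), (if d ∣ i ∧ 0 < i ∧ i ≠ N then (1 : ℚ) else 0)
        = ∑ i ∈ Finset.range N, (if d ∣ i ∧ 0 < i then (1 : ℚ) else 0) := by
      rw [Finset.sum_range_succ, if_neg (by tauto), add_zero]
      refine Finset.sum_congr rfl fun i hi => ?_
      have : i < N := Finset.mem_range.mp hi
      by_cases h1 : d ∣ i ∧ 0 < i
      · rw [if_pos ⟨h1.1, h1.2, by omega⟩, if_pos h1]
      · rw [if_neg (by tauto), if_neg h1]
    rw [hsplit]
    have hfilter : (Finset.range (N + 1)).filter (fun i => d ∣ i ∧ 0 < i)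
        = (Finset.Ioc 0 N).filter (fun i => d ∣ i) := by
      ext i
      simp only [Finset.mem_filter, Finset.mem_range, Finset.mem_Ioc]
      omega
    have hcard : ∑ i ∈ Finset.range (N + 1), (if d ∣ i ∧ 0 < i then (1 : ℚ) else 0)
        = ((N / d : ℕ) : ℚ) := by
      rw [Finset.sum_boole, hfilter, Nat.Ioc_filter_dvd_card_eq_div]
    have hsucc := Finset.sum_range_succ (fun i => if d ∣ i ∧ 0 < i then (1 : ℚ) else 0) N
    rw [if_pos h] at hsucc
    rw [if_pos h]
    linarith [hcard, hsucc]
  · rw [if_neg h, if_neg h, zero_add]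
    refine Finset.sum_eq_zero fun i hi => ?_
    have hiN : i ≤ N := by simpa [Nat.lt_succ_iff] using Finset.mem_range.mp hi
    by_cases h1 : d ∣ i ∧ 0 < i
    · rw [if_pos h1, one_mul, if_neg]
      rintro ⟨hd1, hd2⟩
      exact h ⟨by
        have := Nat.dvd_add h1.1 hd1
        rwa [Nat.add_sub_cancel' hiN] at this, by omega⟩
    · rw [if_neg h1, zero_mul]

/-- The explicit value of the `N`-th `q`-coefficient of `Zc m * Zc (-m)`. -/
noncomputable def Fm (N : ℕ) : ℤ → ℚ := fun m =>
  if m = 0 then (if N = 0 then (1/4 : ℚ) else 0)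
  else -(if m.natAbs ∣ N ∧ 0 < N then ((N / m.natAbs : ℕ) : ℚ) else 0)

lemma coeff_Zc_mul (N : ℕ) (m : ℤ) :
    PowerSeries.coeff N (Zc m * Zc (-m)) = Fm N m := by
  rcases lt_trichotomy m 0 with hm | hm | hm
  · obtain ⟨k, hk⟩ : ∃ k : ℕ, m = -((k : ℤ) + 1) := ⟨(-m - 1).toNat, by omega⟩
    subst hk
    rw [Zc_neg, show -(-((k : ℤ) + 1)) = (k : ℤ) + 1 by ring, Zc_pos]
    have hprod : (-Ad (k + 1)) * (1 + Ad (k + 1)) = -(Ad (k + 1) * (1 + Ad (k + 1))) := by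
      ring
    have hna : (-((k : ℤ) + 1)).natAbs = k + 1 := by omega
    rw [hprod, map_neg, key, Fm, if_neg (show (-((k : ℤ) + 1)) ≠ 0 by omega), hna]
  · subst hm
    rw [neg_zero, Zc_zero, ← map_mul, PowerSeries.coeff_C, Fm, if_pos rfl]
    norm_num
  · obtain ⟨k, hk⟩ : ∃ k : ℕ, m = (k : ℤ) + 1 := ⟨(m - 1).toNat, by omega⟩
    subst hk
    rw [Zc_pos, Zc_neg]
    have hprod : (1 + Ad (k + 1)) * (-Ad (k + 1)) = -(Ad (k + 1) * (1 + Ad (k + 1))) := by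
      ring
    have hna : ((k : ℤ) + 1).natAbs = k + 1 := by omega
    rw [hprod, map_neg, key, Fm, if_neg (show ((k : ℤ) + 1) ≠ 0 by omega), hna]

lemma Fm_neg (N : ℕ) (m : ℤ) : Fm N (-m) = Fm N m := by
  simp [Fm, neg_eq_zero, Int.natAbs_neg]

/-- The constant term in `ζ` of `Z²` equals `−2G₂ + 1/6`. -/
theorem stmt14 :
    (PowerSeries.mk fun N =>
        ∑ᶠ m : ℤ, PowerSeries.coeff N (Zc m * Zc (-m)))
      = PowerSeries.C (-2 : ℚ) * Gtwo + PowerSeries.C (1 / 6 : ℚ) := by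
  ext N
  rw [PowerSeries.coeff_mk, map_add, PowerSeries.coeff_C_mul, PowerSeries.coeff_C,
    show (PowerSeries.coeff N) Gtwo
      = if N = 0 then (-1/24 : ℚ) else ∑ d ∈ N.divisors, (d : ℚ) by simp [Gtwo],
    finsum_congr (coeff_Zc_mul N)]
  by_cases hN : N = 0
  · subst hN
    rw [finsum_eq_single _ 0
      (fun m hm => by rw [Fm, if_neg hm, if_neg (by simp), neg_zero])]
    norm_num [Fm]
  · have hN' : 0 < N := Nat.pos_of_ne_zero hN
    have hsupp : Function.support (Fm N) ⊆ (Finset.Icc (-(N : ℤ)) N : Finset ℤ) := by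
      intro m hm
      simp only [Function.mem_support] at hm
      simp only [Finset.coe_Icc, Set.mem_Icc]
      by_cases h0 : m = 0
      · subst h0; omega
      · have hd : m.natAbs ∣ N ∧ 0 < N := by
          by_contra hc
          exact hm (by rw [Fm, if_neg h0, if_neg hc, neg_zero])
        have := Nat.le_of_dvd hN' hd.1
        omega
    rw [finsum_eq_finset_sum_of_support_subset (Fm N) hsupp]
    have hFm0 : Fm N 0 = 0 := by rw [Fm, if_pos rfl, if_neg hN]
    have hsplit : Finset.Icc (-(N : ℤ)) N
        = Finset.Icc (-(N : ℤ)) (-1) ∪ Finset.Icc 0 N := by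
      ext m; simp only [Finset.mem_Icc, Finset.mem_union]; omega
    have hdisj : Disjoint (Finset.Icc (-(N : ℤ)) (-1)) (Finset.Icc (0 : ℤ) N) := by
      rw [Finset.disjoint_left]
      intro a ha hb
      simp only [Finset.mem_Icc] at ha hb
      omega
    have h0ins : Finset.Icc (0 : ℤ) N = insert (0 : ℤ) (Finset.Icc (1 : ℤ) (N : ℤ)) := by
      ext m; simp only [Finset.mem_Icc, Finset.mem_insert]; omega
    rw [hsplit, Finset.sum_union hdisj, h0ins,
      Finset.sum_insert (by simp), hFm0, zero_add]
    have himg : Finset.Icc (-(N : ℤ)) (-1)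
        = (Finset.Icc (1 : ℤ) N).image (fun m => -m) := by
      ext a
      simp only [Finset.mem_image, Finset.mem_Icc]
      constructor
      · intro ha; exact ⟨-a, by omega, by omega⟩
      · rintro ⟨b, hb, rfl⟩; omega
    have hneg : ∑ m ∈ Finset.Icc (-(N : ℤ)) (-1), Fm N m
        = ∑ m ∈ Finset.Icc (1 : ℤ) N, Fm N m := by
      rw [himg, Finset.sum_image (by intro x _ y _ h; exact neg_inj.mp h)]
      exact Finset.sum_congr rfl fun m _ => Fm_neg N m
    have himgN : Finset.Icc (1 : ℤ) N
        = (Finset.Icc (1 : ℕ) N).image (fun n : ℕ => (n : ℤ)) := by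
      ext a
      simp only [Finset.mem_image, Finset.mem_Icc]
      constructor
      · intro ha; exact ⟨a.toNat, by omega, by omega⟩
      · rintro ⟨b, hb, rfl⟩; omega
    have hdvs : (Finset.Icc (1 : ℕ) N).filter (fun n => n ∣ N) = N.divisors := by
      ext d
      simp only [Finset.mem_filter, Finset.mem_Icc, Nat.mem_divisors]
      constructor
      · rintro ⟨⟨h1, h2⟩, h3⟩; exact ⟨h3, hN⟩
      · rintro ⟨h1, h2⟩
        have := Nat.le_of_dvd hN' h1
        have : d ≠ 0 := by rintro rfl; exact hN (Nat.eq_zero_of_zero_dvd h1)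
        omega
    have hS : ∑ m ∈ Finset.Icc (1 : ℤ) N, Fm N m
        = -∑ d ∈ N.divisors, ((N / d : ℕ) : ℚ) := by
      rw [himgN, Finset.sum_image (by intro x _ y _ h; exact Nat.cast_injective h)]
      have h1 : ∀ n ∈ Finset.Icc (1 : ℕ) N,
          Fm N ((n : ℤ)) = -(if n ∣ N then ((N / n : ℕ) : ℚ) else 0) := by
        intro n hn
        simp only [Finset.mem_Icc] at hn
        rw [Fm, if_neg (by omega)]
        congr 1
        rw [Int.natAbs_natCast]
        exact if_congr (and_iff_left hN') rfl rfl
      rw [Finset.sum_congr rfl h1, Finset.sum_neg_distrib, neg_inj,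
        ← Finset.sum_filter, hdvs]
    rw [hneg, hS, Nat.sum_div_divisors N (fun d => ((d : ℕ) : ℚ)),
      if_neg hN, if_neg hN]
    ring
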